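/- For every Heisenberg plane V ∈ 𝒱^k, the projection P_V : ℍⁿ → V is 1-Lipschitz with respect to the Korányi metric d: d(P_V(x), P_V(y)) ≤ d(x,y) for all x, y ∈ ℍⁿ. -/

import Mathlib

open scoped BigOperators
noncomputable section

abbrev Heis (n : ℕ) := EuclideanSpace ℝ (Fin (2*n)) × ℝ

def symA (n : ℕ) (x y : EuclideanSpace ℝ (Fin (2*n))) : ℝ :=
  ∑ i : Fin n, (x ⟨i.val + n, by have := i.isLt; omega⟩ * y ⟨i.val, by have := i.isLt; omega⟩
    - x ⟨i.val, by have := i.isLt; omega⟩ * y ⟨i.val + n, by have := i.isLt; omega⟩)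

def hMul (n : ℕ) (x y : Heis n) : Heis n :=
  (x.1 + y.1, x.2 + y.2 + 2 * symA n x.1 y.1)

def hInv (n : ℕ) (x : Heis n) : Heis n := (-x.1, -x.2)

def Knorm (n : ℕ) (x : Heis n) : ℝ := (‖x.1‖^4 + x.2^2) ^ ((1:ℝ)/4)

def Kdist (n : ℕ) (x y : Heis n) : ℝ := Knorm n (hMul n (hInv n y) x)

def isotropic (n : ℕ) (W : Submodule ℝ (EuclideanSpace ℝ (Fin (2*n)))) : Prop :=
  ∀ x ∈ W, ∀ y ∈ W, symA n x y = 0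

def plane (n : ℕ) (p : Heis n) (W : Submodule ℝ (EuclideanSpace ℝ (Fin (2*n)))) : Set (Heis n) :=
  {z | ∃ w ∈ W, z = hMul n p (w, (0:ℝ))}

def projH (n : ℕ) (W : Submodule ℝ (EuclideanSpace ℝ (Fin (2*n)))) (x : Heis n) : Heis n :=
  ((W.orthogonalProjection x.1 : EuclideanSpace ℝ (Fin (2*n))), 0)

def PV (n : ℕ) (p : Heis n) (W : Submodule ℝ (EuclideanSpace ℝ (Fin (2*n)))) (x : Heis n) : Heis n :=
  hMul n p (projH n W (hMul n (hInv n p) x))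

/-!
`P_V` is the conjugate, by the left translation `τ_p`, of the projection onto `W × {0}`, and the
Korányi distance is left invariant. It dominates the Euclidean distance of the horizontal parts and
equals it on `W × {0}`, because the symplectic form defining the group law vanishes on the
isotropic subspace `W`. So everything reduces to the orthogonal projection onto `W` being
1-Lipschitz.
-/

section Symplectic

variable {n : ℕ}

lemma symA_add_left (x y z : EuclideanSpace ℝ (Fin (2*n))) :
    symA n (x + y) z = symA n x z + symA n y z := by
  simp only [symA, PiLp.add_apply, ← Finset.sum_add_distrib]
  exact Finset.sum_congr rfl fun _ _ => by ring

lemma symA_add_right (x y z : EuclideanSpace ℝ (Fin (2*n))) :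
    symA n x (y + z) = symA n x y + symA n x z := by
  simp only [symA, PiLp.add_apply, ← Finset.sum_add_distrib]
  exact Finset.sum_congr rfl fun _ _ => by ring

lemma symA_neg_left (x y : EuclideanSpace ℝ (Fin (2*n))) :
    symA n (-x) y = -symA n x y := by
  simp only [symA, PiLp.neg_apply, ← Finset.sum_neg_distrib]
  exact Finset.sum_congr rfl fun _ _ => by ring

lemma symA_anticomm (x y : EuclideanSpace ℝ (Fin (2*n))) :
    -symA n x y = symA n y x := by
  simp only [symA, ← Finset.sum_neg_distrib]
  exact Finset.sum_congr rfl fun _ _ => by ring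

lemma symA_self (x : EuclideanSpace ℝ (Fin (2*n))) : symA n x x = 0 := by
  linarith [symA_anticomm x x]

end Symplectic

section Koranyi

variable {n : ℕ}

lemma hMul_hInv_fst (x y : Heis n) : (hMul n (hInv n y) x).1 = x.1 - y.1 :=
  neg_add_eq_sub y.1 x.1

lemma hInv_hMul_mul_hMul (p x y : Heis n) :
    hMul n (hInv n (hMul n p y)) (hMul n p x) = hMul n (hInv n y) x := by
  refine Prod.ext (by simp only [hMul, hInv]; abel) ?_
  simp only [hMul, hInv, neg_add, symA_add_left, symA_add_right, symA_neg_left, symA_self,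
    ← symA_anticomm p.1 y.1]
  ring

lemma Kdist_hMul_left (p x y : Heis n) :
    Kdist n (hMul n p x) (hMul n p y) = Kdist n x y := by
  rw [Kdist, Kdist, hInv_hMul_mul_hMul]

lemma Knorm_horizontal (v : EuclideanSpace ℝ (Fin (2*n))) : Knorm n (v, 0) = ‖v‖ := by
  rw [Knorm, zero_pow two_ne_zero, add_zero, ← Real.rpow_natCast,
    ← Real.rpow_mul (norm_nonneg v)]
  norm_num

lemma norm_fst_le_Knorm (x : Heis n) : ‖x.1‖ ≤ Knorm n x := by
  rw [← Knorm_horizontal]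
  exact Real.rpow_le_rpow (by positivity) (by simpa using sq_nonneg x.2) (by norm_num)

lemma norm_sub_fst_le_Kdist (x y : Heis n) : ‖x.1 - y.1‖ ≤ Kdist n x y :=
  hMul_hInv_fst x y ▸ norm_fst_le_Knorm _

lemma Kdist_horizontal {a b : EuclideanSpace ℝ (Fin (2*n))} (hba : symA n b a = 0) :
    Kdist n (a, 0) (b, 0) = ‖a - b‖ := by
  rw [Kdist, ← hMul_hInv_fst (a, 0) (b, 0), ← Knorm_horizontal]
  congr 2
  simp [hMul, hInv, symA_neg_left, hba]

lemma Kdist_projH_le {W : Submodule ℝ (EuclideanSpace ℝ (Fin (2*n)))} (hW : isotropic n W)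
    (x y : Heis n) : Kdist n (projH n W x) (projH n W y) ≤ Kdist n x y := by
  let P := W.orthogonalProjectionOnto
  calc Kdist n (projH n W x) (projH n W y) = ‖(P x.1 : EuclideanSpace ℝ (Fin (2*n))) - P y.1‖ :=
        Kdist_horizontal (hW _ (P y.1).2 _ (P x.1).2)
    _ = ‖P (x.1 - y.1)‖ := by rw [map_sub, Submodule.coe_norm, Submodule.coe_sub]
    _ ≤ ‖x.1 - y.1‖ := W.norm_orthogonalProjectionOnto_apply_le _
    _ ≤ Kdist n x y := norm_sub_fst_le_Kdist x y

end Koranyi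

theorem stmt8_general (n : ℕ) (W : Submodule ℝ (EuclideanSpace ℝ (Fin (2*n))))
    (hW : isotropic n W) (p x y : Heis n) :
    Kdist n (PV n p W x) (PV n p W y) ≤ Kdist n x y := by
  calc Kdist n (PV n p W x) (PV n p W y)
      = Kdist n (projH n W (hMul n (hInv n p) x)) (projH n W (hMul n (hInv n p) y)) :=
        Kdist_hMul_left _ _ _
    _ ≤ Kdist n (hMul n (hInv n p) x) (hMul n (hInv n p) y) := Kdist_projH_le hW _ _
    _ = Kdist n x y := Kdist_hMul_left _ _ _

/-- The projection onto a Heisenberg `k`-plane is 1-Lipschitz for the Korányi metric. -/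
theorem stmt8 (n k : ℕ) (W : Submodule ℝ (EuclideanSpace ℝ (Fin (2*n))))
    (hW : isotropic n W) (hdim : Module.finrank ℝ W = k) (p x y : Heis n) :
    Kdist n (PV n p W x) (PV n p W y) ≤ Kdist n x y :=
  stmt8_general n W hW p x y
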